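/- For an integer b ≥ 2, let M1 be the presented group on generators ρ0, ρ1, ρ2 with relation set {ρ0^2, ρ1^2, ρ2^2, (ρ0ρ1)^4, (ρ1ρ2)^4, (ρ0ρ2)^2, (ρ1ρ0ρ1ρ2)^b}. Then M1 has order 8b^2, and in M1 the images of ρ0, ρ1, ρ2 and ρ0ρ2 have order exactly 2, the images of ρ0ρ1 and ρ1ρ2 have order exactly 4, and the image of ρ1ρ0ρ1ρ2 has order exactly b. -/

import Mathlib

/-!
`M1` is the automorphism group `(ℤ/b)² ⋊ D₄` of the toroidal map `{4,4}_(b,0)`.  In `M1` the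
translation `t = ρ₁ρ₀ρ₁ρ₂` and its mirror image `u = ρ₁tρ₁` commute, already by the relations of
the `[4,4]` Coxeter group, and `ρ₁ρ₂`, `ρ₁` act on them as a quarter turn and a swap of
coordinates.  This gives a homomorphism from `(ℤ/b)² ⋊ D₄` onto `M1`, inverse to the one defined on
generators by the presentation.  The orders are then read off in `(ℤ/b)² ⋊ D₄` and in its
quotient `D₄`.
-/

namespace Stmt5

def r0 : FreeGroup (Fin 3) := FreeGroup.of 0
def r1 : FreeGroup (Fin 3) := FreeGroup.of 1
def r2 : FreeGroup (Fin 3) := FreeGroup.of 2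

/-- The relations of the presented group `M1` of Proposition 2.3. -/
def rels (b : ℕ) : Set (FreeGroup (Fin 3)) :=
  {r0 ^ 2, r1 ^ 2, r2 ^ 2, (r0 * r1) ^ 4, (r1 * r2) ^ 4, (r0 * r2) ^ 2,
   (r1 * r0 * r1 * r2) ^ b}

/-- The image of the `i`-th generator in `M1`. -/
def g (b : ℕ) (i : Fin 3) : PresentedGroup (rels b) := PresentedGroup.of i

end Stmt5

theorem orderOf_eq_of_pow_eq_one_of_map_eq {G H : Type*} [Monoid G] [Monoid H] (f : G →* H)
    {x : G} {n : ℕ} (hx : x ^ n = 1) (hfx : orderOf (f x) = n) : orderOf x = n :=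
  Nat.dvd_antisymm (orderOf_dvd_of_pow_eq_one hx) (hfx ▸ orderOf_map_dvd f x)

section Involutions

variable {G : Type*} [Group G] {a c : G}

theorem inv_eq_self_of_sq_eq_one (ha : a ^ 2 = 1) : a⁻¹ = a :=
  inv_eq_iff_mul_eq_one.2 (by rw [← sq, ha])

theorem mul_self_eq_one_of_sq_eq_one (ha : a ^ 2 = 1) : a * a = 1 := by
  rw [← sq, ha]

theorem mul_mul_cancel_left_of_sq_eq_one (ha : a ^ 2 = 1) (w : G) : a * (a * w) = w := by
  rw [← mul_assoc, mul_self_eq_one_of_sq_eq_one ha, one_mul]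

theorem sq_mul_comm_of_pow_four_eq_one (ha : a ^ 2 = 1) (hc : c ^ 2 = 1) (hac : (a * c) ^ 4 = 1) :
    (c * a) ^ 2 = (a * c) ^ 2 := by
  have h : ((a * c) ^ 2)⁻¹ = (a * c) ^ 2 := inv_eq_iff_mul_eq_one.2 (by rw [← pow_add, hac])
  rwa [← inv_pow, mul_inv_rev, inv_eq_self_of_sq_eq_one ha, inv_eq_self_of_sq_eq_one hc] at h

end Involutions

section ZModPowers

variable {G : Type*} [Group G] {n : ℕ}

def zmodPowersHom (a : G) (ha : a ^ n = 1) : Multiplicative (ZMod n) →* G :=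
  AddMonoidHom.toMultiplicativeLeft <| ZMod.lift n
    ⟨zmultiplesHom _ (Additive.ofMul a), by
      rw [zmultiplesHom_apply, natCast_zsmul, ← ofMul_pow, ha, ofMul_one]⟩

theorem zmodPowersHom_apply (a : G) (ha : a ^ n = 1) (x : Multiplicative (ZMod n)) :
    zmodPowersHom a ha x = a ^ (x.toAdd.cast : ℤ) :=
  rfl

theorem zmodPowersHom_ofAdd_intCast (a : G) (ha : a ^ n = 1) (k : ℤ) :
    zmodPowersHom a ha (.ofAdd (k : ZMod n)) = a ^ k := by
  simp [zmodPowersHom]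

@[simp]
theorem zmodPowersHom_ofAdd_one (a : G) (ha : a ^ n = 1) : zmodPowersHom a ha (.ofAdd 1) = a := by
  simpa using zmodPowersHom_ofAdd_intCast a ha 1

theorem conj_zmodPowersHom {a s : G} (ha : a ^ n = 1) (hsa : s * a * s⁻¹ = a⁻¹)
    (x : Multiplicative (ZMod n)) : s * zmodPowersHom a ha x * s⁻¹ = (zmodPowersHom a ha x)⁻¹ := by
  rw [zmodPowersHom_apply, ← conj_zpow, hsa, inv_zpow]

def zmodPowersProdHom {a c : G} (ha : a ^ n = 1) (hc : c ^ n = 1) (hac : Commute a c) :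
    Multiplicative (ZMod n) × Multiplicative (ZMod n) →* G :=
  (zmodPowersHom a ha).noncommCoprod (zmodPowersHom c hc) fun _ _ => hac.zpow_zpow _ _

@[simp]
theorem zmodPowersProdHom_apply {a c : G} (ha : a ^ n = 1) (hc : c ^ n = 1) (hac : Commute a c)
    (p : Multiplicative (ZMod n) × Multiplicative (ZMod n)) :
    zmodPowersProdHom ha hc hac p = zmodPowersHom a ha p.1 * zmodPowersHom c hc p.2 :=
  rfl

theorem MonoidHom.ext_mzmod {f f' : Multiplicative (ZMod n) →* G}
    (h : f (.ofAdd 1) = f' (.ofAdd 1)) : f = f' := by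
  refine MonoidHom.ext fun x => ?_
  obtain ⟨k, hk⟩ := ZMod.intCast_surjective (Multiplicative.toAdd x)
  rw [← ofAdd_toAdd x, ← hk, ← zsmul_one, ofAdd_zsmul, map_zpow, map_zpow, h]

theorem MonoidHom.ext_mzmod_prod {f f' : Multiplicative (ZMod n) × Multiplicative (ZMod n) →* G}
    (h₁ : f (.ofAdd 1, 1) = f' (.ofAdd 1, 1)) (h₂ : f (1, .ofAdd 1) = f' (1, .ofAdd 1)) :
    f = f' := by
  have hl : f.comp (.inl _ _) = f'.comp (.inl _ _) := MonoidHom.ext_mzmod h₁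
  have hr : f.comp (.inr _ _) = f'.comp (.inr _ _) := MonoidHom.ext_mzmod h₂
  refine MonoidHom.ext fun p => ?_
  rw [← Prod.fst_mul_snd p, map_mul, map_mul]
  exact congr_arg₂ (· * ·) (DFunLike.congr_fun hl p.1) (DFunLike.congr_fun hr p.2)

end ZModPowers

namespace DihedralGroup

variable {n : ℕ} {G : Type*} [Group G]

def lift {a s : G} (ha : a ^ n = 1) (hs : s ^ 2 = 1) (hsa : s * a * s⁻¹ = a⁻¹) :
    DihedralGroup n →* G where
  toFun
    | r i => zmodPowersHom a ha (.ofAdd i)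
    | sr i => s * zmodPowersHom a ha (.ofAdd i)
  map_one' := by
    show zmodPowersHom a ha (.ofAdd 0) = 1
    rw [ofAdd_zero, map_one]
  map_mul' := by
    set f := zmodPowersHom a ha
    have hfs (i : ZMod n) : f (.ofAdd i) * s = s * (f (.ofAdd i))⁻¹ := by
      rw [← conj_zmodPowersHom ha hsa, inv_eq_self_of_sq_eq_one hs, ← mul_assoc, ← mul_assoc,
        mul_self_eq_one_of_sq_eq_one hs, one_mul]
    rintro (i | i) (j | j) <;>
      simp only [r_mul_r, r_mul_sr, sr_mul_r, sr_mul_sr, sub_eq_neg_add, ofAdd_add, ofAdd_neg,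
        map_mul, map_inv]
    · rw [← mul_assoc, ← mul_assoc, hfs]
    · rw [mul_assoc]
    · rw [mul_assoc s, ← mul_assoc (f _), hfs, ← mul_assoc, mul_mul_cancel_left_of_sq_eq_one hs]

@[simp]
theorem lift_r {a s : G} (ha : a ^ n = 1) (hs : s ^ 2 = 1) (hsa : s * a * s⁻¹ = a⁻¹)
    (i : ZMod n) : lift ha hs hsa (r i) = zmodPowersHom a ha (.ofAdd i) :=
  rfl

@[simp]
theorem lift_sr {a s : G} (ha : a ^ n = 1) (hs : s ^ 2 = 1) (hsa : s * a * s⁻¹ = a⁻¹)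
    (i : ZMod n) : lift ha hs hsa (sr i) = s * zmodPowersHom a ha (.ofAdd i) :=
  rfl

theorem closure_r_one_sr_zero :
    Subgroup.closure {r 1, sr 0} = (⊤ : Subgroup (DihedralGroup n)) := by
  have hr (i : ZMod n) : r i ∈ Subgroup.closure {r 1, sr 0} := by
    obtain ⟨k, rfl⟩ := ZMod.intCast_surjective i
    rw [← r_one_zpow]
    exact Subgroup.zpow_mem _ (Subgroup.subset_closure (by simp)) k
  refine eq_top_iff.2 fun x _ => ?_
  rcases x with i | i
  · exact hr i
  · rw [← zero_add i, ← sr_mul_r]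
    exact Subgroup.mul_mem _ (Subgroup.subset_closure (by simp)) (hr i)

end DihedralGroup

theorem SemidirectProduct.lift_compat_of_closure_eq_top {N G H : Type*} [Group N] [Group G]
    [Group H] {φ : G →* MulAut N} (fn : N →* H) (fg : G →* H) {S : Set G}
    (hS : Subgroup.closure S = ⊤)
    (h : ∀ g ∈ S, fn.comp (φ g).toMonoidHom = (MulAut.conj (fg g)).toMonoidHom.comp fn) (g : G) :
    fn.comp (φ g).toMonoidHom = (MulAut.conj (fg g)).toMonoidHom.comp fn := by
  suffices key : ∀ v, fn (φ g v) = fg g * fn v * (fg g)⁻¹ from MonoidHom.ext key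
  induction (hS ▸ Subgroup.mem_top g : g ∈ Subgroup.closure S) using Subgroup.closure_induction with
  | mem g hg => exact DFunLike.congr_fun (h g hg)
  | one => simp
  | mul g₁ g₂ _ _ h₁ h₂ => simp [h₁, h₂, mul_assoc]
  | inv g _ hg =>
    intro v
    have := hg ((φ g)⁻¹ v)
    rw [MulAut.apply_inv_self] at this
    rw [map_inv, map_inv, inv_inv, this]
    group

structure Coxeter44 {G : Type*} [Group G] (x y z : G) : Prop where
  x_sq : x ^ 2 = 1
  y_sq : y ^ 2 = 1
  z_sq : z ^ 2 = 1
  xy_pow_four : (x * y) ^ 4 = 1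
  yz_pow_four : (y * z) ^ 4 = 1
  xz_sq : (x * z) ^ 2 = 1

namespace Coxeter44

/- In the names below, `t = y x y z` and `u = x y z y`: when `x, y, z` are the reflections in the
sides of a flag triangle of the square tessellation, these are its two unit translations. -/

variable {G : Type*} [Group G] {x y z : G}

theorem z_mul_x_mul (h : Coxeter44 x y z) (w : G) : z * (x * w) = x * (z * w) := by
  have hxz : (x * z)⁻¹ = x * z := inv_eq_self_of_sq_eq_one h.xz_sq
  rw [mul_inv_rev, inv_eq_self_of_sq_eq_one h.x_sq, inv_eq_self_of_sq_eq_one h.z_sq] at hxz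
  rw [← mul_assoc, hxz, mul_assoc]

theorem zy_cube (h : Coxeter44 x y z) : z * (y * (z * (y * (z * y)))) = y * z := by
  have hzy : (z * y) ^ 3 = (z * y)⁻¹ := eq_inv_of_mul_eq_one_left <| by
    rw [← pow_succ, ← inv_inj, ← inv_pow, mul_inv_rev, inv_eq_self_of_sq_eq_one h.y_sq,
      inv_eq_self_of_sq_eq_one h.z_sq, h.yz_pow_four, inv_one]
  rw [mul_inv_rev, inv_eq_self_of_sq_eq_one h.y_sq, inv_eq_self_of_sq_eq_one h.z_sq] at hzy
  simpa only [pow_succ, pow_zero, one_mul, mul_assoc] using hzy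

theorem conj_y_yz (h : Coxeter44 x y z) : y * (y * z) * y⁻¹ = (y * z)⁻¹ := by
  simp only [mul_inv_rev, inv_eq_self_of_sq_eq_one h.y_sq, inv_eq_self_of_sq_eq_one h.z_sq,
    mul_mul_cancel_left_of_sq_eq_one h.y_sq]

theorem conj_y_t (h : Coxeter44 x y z) : y * (y * x * y * z) * y⁻¹ = x * y * z * y := by
  simp only [inv_eq_self_of_sq_eq_one h.y_sq, mul_assoc, mul_mul_cancel_left_of_sq_eq_one h.y_sq]

theorem conj_y_u (h : Coxeter44 x y z) : y * (x * y * z * y) * y⁻¹ = y * x * y * z := by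
  simp only [inv_eq_self_of_sq_eq_one h.y_sq, mul_assoc, mul_self_eq_one_of_sq_eq_one h.y_sq,
    mul_one]

theorem conj_yz_t (h : Coxeter44 x y z) :
    y * z * (y * x * y * z) * (y * z)⁻¹ = (x * y * z * y)⁻¹ := by
  simp only [mul_inv_rev, inv_eq_self_of_sq_eq_one h.x_sq, inv_eq_self_of_sq_eq_one h.y_sq,
    inv_eq_self_of_sq_eq_one h.z_sq, mul_assoc, mul_mul_cancel_left_of_sq_eq_one h.z_sq,
    mul_self_eq_one_of_sq_eq_one h.y_sq, mul_one]

theorem conj_yz_u (h : Coxeter44 x y z) :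
    y * z * (x * y * z * y) * (y * z)⁻¹ = y * x * y * z := by
  simp only [mul_inv_rev, inv_eq_self_of_sq_eq_one h.y_sq, inv_eq_self_of_sq_eq_one h.z_sq,
    mul_assoc]
  rw [h.z_mul_x_mul, h.zy_cube]

theorem commute_t_u (h : Coxeter44 x y z) : Commute (y * x * y * z) (x * y * z * y) :=
  calc y * x * y * z * (x * y * z * y) = (y * x) ^ 2 * (z * y) ^ 2 := by
        simp only [sq, mul_assoc, h.z_mul_x_mul]
    _ = (x * y) ^ 2 * (y * z) ^ 2 := by
        rw [sq_mul_comm_of_pow_four_eq_one h.x_sq h.y_sq h.xy_pow_four,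
          sq_mul_comm_of_pow_four_eq_one h.y_sq h.z_sq h.yz_pow_four]
    _ = x * y * z * y * (y * x * y * z) := by
        simp only [sq, mul_assoc, mul_mul_cancel_left_of_sq_eq_one h.y_sq, h.z_mul_x_mul]

theorem u_mul_y_mul_inv_yz (h : Coxeter44 x y z) : x * y * z * y * (y * (y * z)⁻¹) = x := by
  simp only [mul_inv_rev, inv_eq_self_of_sq_eq_one h.y_sq, inv_eq_self_of_sq_eq_one h.z_sq,
    mul_assoc, mul_mul_cancel_left_of_sq_eq_one h.y_sq, mul_mul_cancel_left_of_sq_eq_one h.z_sq,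
    mul_self_eq_one_of_sq_eq_one h.y_sq, mul_one]

end Coxeter44

namespace Stmt5

open DihedralGroup SemidirectProduct

section Model

abbrev Lattice (b : ℕ) := Multiplicative (ZMod b) × Multiplicative (ZMod b)

def quarterTurn (b : ℕ) : MulAut (Lattice b) :=
  MulEquiv.prodComm.trans ((MulEquiv.inv _).prodCongr (MulEquiv.refl _))

def swap (b : ℕ) : MulAut (Lattice b) := MulEquiv.prodComm

variable {b : ℕ}

@[simp]
theorem quarterTurn_apply (p : Lattice b) : quarterTurn b p = (p.2⁻¹, p.1) :=
  rfl

@[simp]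
theorem quarterTurn_symm_apply (p : Lattice b) : (quarterTurn b).symm p = (p.2, p.1⁻¹) :=
  rfl

@[simp]
theorem swap_apply (p : Lattice b) : swap b p = (p.2, p.1) :=
  rfl

@[simp]
theorem swap_symm_apply (p : Lattice b) : (swap b).symm p = (p.2, p.1) :=
  rfl

def action (b : ℕ) : DihedralGroup 4 →* MulAut (Lattice b) :=
  DihedralGroup.lift (a := quarterTurn b) (s := swap b) (by ext p <;> simp [pow_succ])
    (by ext p <;> simp [sq]) (by ext p <;> simp)

abbrev TorusGroup (b : ℕ) := Lattice b ⋊[action b] DihedralGroup 4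

/-- `ρ₀, ρ₁, ρ₂` act on the torus `(ℤ/b)²` as the reflections in the lines `x = 1/2`, `y = x` and
`y = 0`, the sides of a flag triangle of the square tessellation. -/
def gen (b : ℕ) : Fin 3 → TorusGroup b
  | 0 => ⟨(.ofAdd 1, 1), sr (-1)⟩
  | 1 => ⟨1, sr 0⟩
  | 2 => ⟨1, sr 1⟩

@[simp]
theorem gen_zero : gen b 0 = ⟨(.ofAdd 1, 1), sr (-1)⟩ :=
  rfl

@[simp]
theorem gen_one : gen b 1 = ⟨1, sr 0⟩ :=
  rfl

@[simp]
theorem gen_two : gen b 2 = ⟨1, sr 1⟩ :=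
  rfl

variable (b)

theorem gen_t : gen b 1 * gen b 0 * gen b 1 * gen b 2 = inl (1, .ofAdd 1) := by
  change _ = (⟨(1, .ofAdd 1), 1⟩ : TorusGroup b)
  simp only [gen_zero, gen_one, gen_two, mul_def]
  ext <;> simp [action]

theorem gen_u : gen b 0 * gen b 1 * gen b 2 * gen b 1 = inl (.ofAdd 1, 1) := by
  change _ = (⟨(.ofAdd 1, 1), 1⟩ : TorusGroup b)
  simp only [gen_zero, gen_one, gen_two, mul_def]
  ext <;> simp [action]

theorem gen_yz : gen b 1 * gen b 2 = inr (r 1) := by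
  change _ = (⟨1, r 1⟩ : TorusGroup b)
  simp only [gen_one, gen_two, mul_def]
  ext <;> simp [action]

theorem gen_rels : ∀ w ∈ rels b, FreeGroup.lift (gen b) w = 1 := by
  simp only [rels, Set.mem_insert_iff, Set.mem_singleton_iff, forall_eq_or_imp, forall_eq, r0, r1,
    r2, map_pow, map_mul, FreeGroup.lift_apply_of, gen_t]
  refine ⟨?_, ?_, ?_, ?_, ?_, ?_, ?_⟩
  rotate_right
  · simp [← map_pow, ← ofAdd_nsmul, Prod.mk_one_one]
  all_goals
    simp only [gen_zero, gen_one, gen_two, pow_succ, pow_zero, one_mul, mul_def]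
    ext <;> simp [action] <;> decide

def toModel : PresentedGroup (rels b) →* TorusGroup b :=
  PresentedGroup.toGroup (gen_rels b)

@[simp]
theorem toModel_g (i : Fin 3) : toModel b (g b i) = gen b i :=
  PresentedGroup.toGroup.of (gen_rels b)

end Model

section Presentation

variable (b : ℕ)

theorem g_relations :
    Coxeter44 (g b 0) (g b 1) (g b 2) ∧ (g b 1 * g b 0 * g b 1 * g b 2) ^ b = 1 := by
  have h : ∀ w ∈ rels b, PresentedGroup.mk (rels b) w = 1 := fun _ => PresentedGroup.one_of_mem
  simp only [rels, Set.mem_insert_iff, Set.mem_singleton_iff, forall_eq_or_imp, forall_eq, r0, r1,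
    r2] at h
  obtain ⟨h0, h1, h2, h01, h12, h02, ht⟩ := h
  exact ⟨⟨h0, h1, h2, h01, h12, h02⟩, ht⟩

theorem g_u_pow : (g b 0 * g b 1 * g b 2 * g b 1) ^ b = 1 := by
  rw [← (g_relations b).1.conj_y_t, conj_pow, (g_relations b).2, mul_one, mul_inv_cancel]

def latticeHom : Lattice b →* PresentedGroup (rels b) :=
  zmodPowersProdHom (g_u_pow b) (g_relations b).2 (g_relations b).1.commute_t_u.symm

def dihedralHom : DihedralGroup 4 →* PresentedGroup (rels b) :=
  have h := (g_relations b).1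
  DihedralGroup.lift h.yz_pow_four h.y_sq h.conj_y_yz

theorem latticeHom_compat (d : DihedralGroup 4) :
    (latticeHom b).comp (action b d).toMonoidHom =
      (MulAut.conj (dihedralHom b d)).toMonoidHom.comp (latticeHom b) := by
  have h := (g_relations b).1
  refine SemidirectProduct.lift_compat_of_closure_eq_top _ _ closure_r_one_sr_zero ?_ d
  simp only [Set.mem_insert_iff, Set.mem_singleton_iff, forall_eq_or_imp, forall_eq]
  constructor <;> apply MonoidHom.ext_mzmod_prod <;>
    simp only [MonoidHom.comp_apply, MulEquiv.coe_toMonoidHom, MulAut.conj_apply, action,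
      dihedralHom, latticeHom, lift_r, lift_sr, ofAdd_zero, map_one, mul_one,
      zmodPowersHom_ofAdd_one, quarterTurn_apply, swap_apply, zmodPowersProdHom_apply, inv_one,
      map_inv, one_mul]
  exacts [h.conj_yz_u.symm, h.conj_yz_t.symm, h.conj_y_u.symm, h.conj_y_t.symm]

def fromModel : TorusGroup b →* PresentedGroup (rels b) :=
  SemidirectProduct.lift _ _ (latticeHom_compat b)

theorem fromModel_toModel : (fromModel b).comp (toModel b) = MonoidHom.id _ := by
  have h := (g_relations b).1
  refine PresentedGroup.ext fun i => ?_
  change fromModel b (toModel b (g b i)) = g b i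
  fin_cases i <;>
    simp only [Fin.zero_eta, Fin.mk_one, Fin.reduceFinMk, toModel_g, gen_zero, gen_one, gen_two,
      mk_eq_inl_mul_inr, map_mul, fromModel, lift_inl, lift_inr, latticeHom, dihedralHom,
      zmodPowersProdHom_apply, lift_sr, ofAdd_zero, ofAdd_neg, map_one, map_inv,
      zmodPowersHom_ofAdd_one, mul_one, one_mul]
  exacts [h.u_mul_y_mul_inv_yz, mul_mul_cancel_left_of_sq_eq_one h.y_sq _]

theorem toModel_fromModel : (toModel b).comp (fromModel b) = MonoidHom.id _ := by
  refine SemidirectProduct.hom_ext (MonoidHom.ext_mzmod_prod ?_ ?_)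
    (MonoidHom.eq_of_eqOn_dense closure_r_one_sr_zero ?_)
  · simpa [fromModel, latticeHom] using gen_u b
  · simpa [fromModel, latticeHom] using gen_t b
  · rintro d (rfl | rfl)
    · simpa [fromModel, dihedralHom] using gen_yz b
    · simp [fromModel, dihedralHom]

def modelEquiv : PresentedGroup (rels b) ≃* TorusGroup b :=
  MonoidHom.toMulEquiv _ _ (fromModel_toModel b) (toModel_fromModel b)

end Presentation

theorem card_presentedGroup (b : ℕ) : Nat.card (PresentedGroup (rels b)) = 8 * b ^ 2 := by
  rw [Nat.card_congr (modelEquiv b).toEquiv, SemidirectProduct.card, Nat.card_prod,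
    Nat.card_congr Multiplicative.toAdd, Nat.card_zmod, DihedralGroup.nat_card]
  ring

def toDihedral (b : ℕ) : PresentedGroup (rels b) →* DihedralGroup 4 :=
  SemidirectProduct.rightHom.comp (toModel b)

@[simp]
theorem toDihedral_g (b : ℕ) (i : Fin 3) : toDihedral b (g b i) = (gen b i).right :=
  congrArg SemidirectProduct.right (toModel_g b i)

theorem stmt_5_general (b : ℕ) :
    Nat.card (PresentedGroup (rels b)) = 8 * b ^ 2 ∧
    orderOf (g b 0) = 2 ∧ orderOf (g b 1) = 2 ∧ orderOf (g b 2) = 2 ∧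
    orderOf (g b 0 * g b 2) = 2 ∧
    orderOf (g b 0 * g b 1) = 4 ∧ orderOf (g b 1 * g b 2) = 4 ∧
    orderOf (g b 1 * g b 0 * g b 1 * g b 2) = b := by
  obtain ⟨h, ht⟩ := g_relations b
  refine ⟨card_presentedGroup b, ?_, ?_, ?_, ?_, ?_, ?_, ?_⟩
  · exact orderOf_eq_of_pow_eq_one_of_map_eq (toDihedral b) h.x_sq (by simp)
  · exact orderOf_eq_of_pow_eq_one_of_map_eq (toDihedral b) h.y_sq (by simp)
  · exact orderOf_eq_of_pow_eq_one_of_map_eq (toDihedral b) h.z_sq (by simp)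
  · refine orderOf_eq_of_pow_eq_one_of_map_eq (toDihedral b) h.xz_sq ?_
    simp [orderOf_r]
    decide
  · exact orderOf_eq_of_pow_eq_one_of_map_eq (toDihedral b) h.xy_pow_four (by simp)
  · exact orderOf_eq_of_pow_eq_one_of_map_eq (toDihedral b) h.yz_pow_four (by simp)
  · refine orderOf_eq_of_pow_eq_one_of_map_eq (toModel b) ht ?_
    rw [map_mul, map_mul, map_mul, toModel_g, toModel_g, toModel_g, gen_t,
      orderOf_injective _ inl_injective, Prod.orderOf]
    simp

/-- Proposition 2.3, group `M1`: it has order `8 b^2` and the listed exponents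
are the true orders. -/
theorem stmt_5 (b : ℕ) (hb : 2 ≤ b) :
    Nat.card (PresentedGroup (rels b)) = 8 * b ^ 2 ∧
    orderOf (g b 0) = 2 ∧ orderOf (g b 1) = 2 ∧ orderOf (g b 2) = 2 ∧
    orderOf (g b 0 * g b 2) = 2 ∧
    orderOf (g b 0 * g b 1) = 4 ∧ orderOf (g b 1 * g b 2) = 4 ∧
    orderOf (g b 1 * g b 0 * g b 1 * g b 2) = b :=
  stmt_5_general b

end Stmt5
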